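/- Let T ⊂ S be a dyadic rectangle of area at least two, with left half L, right half R, lower half D, and upper half U (in the time and frequency directions respectively). For each tile p ⊆ T assign a cost c(p) ∈ ℝ. Let m_T = min over disjoint coverings B of T by tiles of Σ_{p∈B} c(p), and similarly define m_L, m_R, m_D, m_U. Then m_T = min{m_L + m_R, m_D + m_U}. -/

import Mathlib

/-- A dyadic rectangle `[2^{-jt} k, 2^{-jt}(k+1)) × [2^{jf} l, 2^{jf}(l+1))`
in the time-frequency plane. -/
def dyadicRect (jt : ℕ) (k : ℕ) (jf : ℤ) (l : ℕ) : Set (ℝ × ℝ) :=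
  Set.Ico ((2:ℝ) ^ (-(jt:ℤ)) * k) ((2:ℝ) ^ (-(jt:ℤ)) * (k + 1)) ×ˢ
  Set.Ico ((2:ℝ) ^ jf * l) ((2:ℝ) ^ jf * (l + 1))

/-- `p` is a tile (a dyadic rectangle of area one, lying in `S = [0,1) × [0,∞)`). -/
def IsTile (p : Set (ℝ × ℝ)) : Prop :=
  ∃ j k l : ℕ, k < 2 ^ j ∧ p = dyadicRect j k (j:ℤ) l

/-- `B` is a finite collection of pairwise disjoint tiles contained in `T`
whose union is `T`. -/
def IsDisjointCover (T : Set (ℝ × ℝ)) (B : Finset (Set (ℝ × ℝ))) : Prop :=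
  (∀ p ∈ B, IsTile p ∧ p ⊆ T) ∧
  (B : Set (Set (ℝ × ℝ))).PairwiseDisjoint id ∧
  ⋃₀ (B : Set (Set (ℝ × ℝ))) = T

open Set

noncomputable section TV

def tInt (jt k : ℕ) : Set ℝ := Ico ((2:ℝ)^(-(jt:ℤ)) * k) ((2:ℝ)^(-(jt:ℤ)) * (k+1))
def fInt (jf : ℤ) (l : ℕ) : Set ℝ := Ico ((2:ℝ)^jf * l) ((2:ℝ)^jf * (l+1))

lemma dyadicRect_eq (jt k jf l) : dyadicRect jt k jf l = tInt jt k ×ˢ fInt jf l := rfl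

lemma zpow_pos' (n : ℤ) : (0:ℝ) < 2 ^ n := zpow_pos (by norm_num) n

lemma mulIco_subset_iff {e a b x y : ℝ} (he : 0 < e) (hab : a < b) :
    Ico (e*a) (e*b) ⊆ Ico (e*x) (e*y) ↔ x ≤ a ∧ b ≤ y := by
  rw [Set.Ico_subset_Ico_iff (by nlinarith)]
  constructor <;> rintro ⟨h1, h2⟩ <;> exact ⟨by nlinarith, by nlinarith⟩

lemma tInt_nonempty (jt k) : (tInt jt k).Nonempty := by
  refine Set.nonempty_Ico.2 ?_
  have := zpow_pos' (-(jt:ℤ)); nlinarith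

lemma fInt_nonempty (jf l) : (fInt jf l).Nonempty := by
  refine Set.nonempty_Ico.2 ?_
  have := zpow_pos' jf; nlinarith

lemma dyadicRect_nonempty (jt k jf l) : (dyadicRect jt k jf l).Nonempty :=
  (tInt_nonempty jt k).prod (fInt_nonempty jf l)

lemma tInt_subset_iff {j j' k k' : ℕ} (h : j ≤ j') :
    tInt j' k' ⊆ tInt j k ↔ 2^(j'-j)*k ≤ k' ∧ k'+1 ≤ 2^(j'-j)*(k+1) := by
  have he : (0:ℝ) < 2^(-(j':ℤ)) := zpow_pos' _
  have key : ∀ n : ℕ, (2:ℝ)^(-(j:ℤ)) * n = 2^(-(j':ℤ)) * ((2^(j'-j)*n : ℕ):ℝ) := by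
    intro n
    push_cast
    rw [← zpow_natCast (2:ℝ) (j'-j), ← mul_assoc, ← zpow_add₀ (by norm_num : (2:ℝ) ≠ 0)]
    congr 2
    omega
  have hA : tInt j k = Ico ((2:ℝ)^(-(j':ℤ)) * ((2^(j'-j)*k : ℕ):ℝ)) ((2:ℝ)^(-(j':ℤ)) * ((2^(j'-j)*(k+1) : ℕ):ℝ)) := by
    simp only [tInt]
    rw [show ((k:ℝ)+1) = ((k+1:ℕ):ℝ) by push_cast; ring, key k, key (k+1)]
  rw [hA]
  simp only [tInt]
  rw [show ((k':ℝ)+1) = ((k'+1:ℕ):ℝ) by push_cast; ring]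
  rw [mulIco_subset_iff he (by exact_mod_cast Nat.lt_succ_self k')]
  constructor <;> rintro ⟨h1,h2⟩ <;> exact ⟨by exact_mod_cast h1, by exact_mod_cast h2⟩

lemma fInt_subset_iff {j' : ℕ} {m : ℤ} {l l' : ℕ} (h : (j':ℤ) ≤ m) :
    fInt (j':ℤ) l' ⊆ fInt m l ↔ 2^((m - j').toNat)*l ≤ l' ∧ l'+1 ≤ 2^((m - j').toNat)*(l+1) := by
  have he : (0:ℝ) < 2^((j':ℤ)) := zpow_pos' _
  have key : ∀ n : ℕ, (2:ℝ)^m * n = 2^((j':ℤ)) * ((2^((m - j').toNat)*n : ℕ):ℝ) := by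
    intro n
    push_cast
    rw [← zpow_natCast (2:ℝ) ((m - j').toNat), ← mul_assoc, ← zpow_add₀ (by norm_num : (2:ℝ) ≠ 0)]
    congr 2
    omega
  have hA : fInt m l = Ico ((2:ℝ)^((j':ℤ)) * ((2^((m - j').toNat)*l : ℕ):ℝ)) ((2:ℝ)^((j':ℤ)) * ((2^((m - j').toNat)*(l+1) : ℕ):ℝ)) := by
    simp only [fInt]
    rw [show ((l:ℝ)+1) = ((l+1:ℕ):ℝ) by push_cast; ring, key l, key (l+1)]
  rw [hA]
  simp only [fInt]
  rw [show ((l':ℝ)+1) = ((l'+1:ℕ):ℝ) by push_cast; ring]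
  rw [mulIco_subset_iff he (by exact_mod_cast Nat.lt_succ_self l')]
  constructor <;> rintro ⟨h1,h2⟩ <;> exact ⟨by exact_mod_cast h1, by exact_mod_cast h2⟩

lemma Ico_len_le {a b x y : ℝ} (hab : a < b) (h : Ico a b ⊆ Ico x y) : b - a ≤ y - x := by
  have := (Set.Ico_subset_Ico_iff hab).1 h; linarith

lemma tInt_scale_le {j j' k k' : ℕ} (h : tInt j' k' ⊆ tInt j k) : j ≤ j' := by
  have hlen := Ico_len_le (by have := zpow_pos' (-(j':ℤ)); nlinarith) h
  have h2 : (2:ℝ)^(-(j':ℤ)) ≤ 2^(-(j:ℤ)) := by nlinarith [zpow_pos' (-(j':ℤ)), zpow_pos' (-(j:ℤ))]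
  have := (zpow_le_zpow_iff_right₀ (by norm_num : (1:ℝ) < 2)).1 h2
  omega

lemma fInt_scale_le {j' : ℕ} {m : ℤ} {l l' : ℕ} (h : fInt (j':ℤ) l' ⊆ fInt m l) : (j':ℤ) ≤ m := by
  have hlen := Ico_len_le (by have := zpow_pos' ((j':ℤ)); nlinarith) h
  have h2 : (2:ℝ)^((j':ℤ)) ≤ 2^m := by nlinarith [zpow_pos' ((j':ℤ)), zpow_pos' m]
  exact (zpow_le_zpow_iff_right₀ (by norm_num : (1:ℝ) < 2)).1 h2

lemma rect_subset_iff {a b a' b' : ℕ} {c c' : ℤ} {d d' : ℕ} :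
    dyadicRect a b c d ⊆ dyadicRect a' b' c' d' ↔ tInt a b ⊆ tInt a' b' ∧ fInt c d ⊆ fInt c' d' := by
  rw [dyadicRect_eq, dyadicRect_eq, Set.prod_subset_prod_iff]
  constructor
  · rintro (h | h | h)
    · exact h
    · exact absurd h (tInt_nonempty a b).ne_empty
    · exact absurd h (fInt_nonempty c d).ne_empty
  · exact Or.inl

-- time bisection of an interval
lemma tInt_split (j k : ℕ) : tInt (j+1) (2*k) ∪ tInt (j+1) (2*k+1) = tInt j k := by
  have key : (2:ℝ)^(-((j:ℤ)+1)) * 2 = 2^(-(j:ℤ)) := by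
    rw [show -((j:ℤ)+1) = -(j:ℤ) - 1 by ring, zpow_sub₀ (by norm_num : (2:ℝ) ≠ 0)]
    field_simp
  have hpos : (0:ℝ) < 2^(-((j:ℤ)+1)) := zpow_pos' _
  simp only [tInt]
  push_cast
  have h1 : (2:ℝ)^(-((j:ℤ)+1)) * (2*(k:ℝ)) ≤ 2^(-((j:ℤ)+1)) * (2*k+1) := by nlinarith
  have h2 : (2:ℝ)^(-((j:ℤ)+1)) * (2*(k:ℝ)+1) ≤ 2^(-((j:ℤ)+1)) * (2*k+1+1) := by nlinarith
  rw [Set.Ico_union_Ico_eq_Ico h1 h2,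
    show (2:ℝ)^(-((j:ℤ)+1)) * (2*(k:ℝ)) = 2^(-(j:ℤ)) * k by linear_combination (k:ℝ) * key,
    show (2:ℝ)^(-((j:ℤ)+1)) * (2*(k:ℝ)+1+1) = 2^(-(j:ℤ)) * (k+1) by linear_combination ((k:ℝ)+1) * key]

-- frequency bisection of an interval
lemma fInt_split (m : ℤ) (l : ℕ) : fInt (m-1) (2*l) ∪ fInt (m-1) (2*l+1) = fInt m l := by
  have key : (2:ℝ)^(m-1) * 2 = 2^m := by
    rw [zpow_sub₀ (by norm_num : (2:ℝ) ≠ 0)]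
    field_simp
  have hpos : (0:ℝ) < 2^(m-1) := zpow_pos' _
  simp only [fInt]
  push_cast
  have h1 : (2:ℝ)^(m-1) * (2*(l:ℝ)) ≤ 2^(m-1) * (2*l+1) := by nlinarith
  have h2 : (2:ℝ)^(m-1) * (2*(l:ℝ)+1) ≤ 2^(m-1) * (2*l+1+1) := by nlinarith
  rw [Set.Ico_union_Ico_eq_Ico h1 h2,
    show (2:ℝ)^(m-1) * (2*(l:ℝ)) = 2^m * l by linear_combination (l:ℝ) * key,
    show (2:ℝ)^(m-1) * (2*(l:ℝ)+1+1) = 2^m * (l+1) by linear_combination ((l:ℝ)+1) * key]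

lemma tInt_disjoint {j : ℕ} {a b : ℕ} (h : a ≠ b) : Disjoint (tInt j a) (tInt j b) := by
  have hpos : (0:ℝ) < 2^(-(j:ℤ)) := zpow_pos' _
  rcases h.lt_or_gt with h | h
  · refine Set.Ico_disjoint_Ico.2 ?_
    have : (2:ℝ)^(-(j:ℤ)) * (a+1) ≤ 2^(-(j:ℤ)) * b := by
      have : (a:ℝ)+1 ≤ b := by exact_mod_cast h
      nlinarith
    exact min_le_of_left_le (this.trans (le_max_right _ _))
  · refine Set.Ico_disjoint_Ico.2 ?_
    have : (2:ℝ)^(-(j:ℤ)) * (b+1) ≤ 2^(-(j:ℤ)) * a := by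
      have : (b:ℝ)+1 ≤ a := by exact_mod_cast h
      nlinarith
    exact min_le_of_right_le (this.trans (le_max_left _ _))

lemma fInt_disjoint {m : ℤ} {a b : ℕ} (h : a ≠ b) : Disjoint (fInt m a) (fInt m b) := by
  have hpos : (0:ℝ) < 2^m := zpow_pos' _
  rcases h.lt_or_gt with h | h
  · refine Set.Ico_disjoint_Ico.2 ?_
    have : (2:ℝ)^m * (a+1) ≤ 2^m * b := by
      have : (a:ℝ)+1 ≤ b := by exact_mod_cast h
      nlinarith
    exact min_le_of_left_le (this.trans (le_max_right _ _))
  · refine Set.Ico_disjoint_Ico.2 ?_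
    have : (2:ℝ)^m * (b+1) ≤ 2^m * a := by
      have : (b:ℝ)+1 ≤ a := by exact_mod_cast h
      nlinarith
    exact min_le_of_right_le (this.trans (le_max_left _ _))

-- dichotomy at interval level (time)
lemma tInt_half {j j' k k' : ℕ} (h : j+1 ≤ j') (hsub : tInt j' k' ⊆ tInt j k) :
    tInt j' k' ⊆ tInt (j+1) (2*k) ∨ tInt j' k' ⊆ tInt (j+1) (2*k+1) := by
  rw [tInt_subset_iff (by omega)] at hsub
  have hE : 2^(j'-j) = 2 * 2^(j'-(j+1)) := by
    rw [show j' - j = (j' - (j+1)) + 1 by omega, pow_succ]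
    ring
  set E := 2^(j'-(j+1)) with hEdef
  have e1 : 2^(j'-j)*k = 2*(E*k) := by rw [hE]; ring
  have e2 : 2^(j'-j)*(k+1) = 2*(E*k) + 2*E := by rw [hE]; ring
  have e3 : E*(2*k) = 2*(E*k) := by ring
  have e4 : E*(2*k+1) = 2*(E*k) + E := by ring
  have e5 : E*(2*k+1+1) = 2*(E*k) + 2*E := by ring
  rcases le_or_gt (k'+1) (2*(E*k) + E) with hc | hc
  · left; rw [tInt_subset_iff h]; simp only [← hEdef]; omega
  · right; rw [tInt_subset_iff h]; simp only [← hEdef]; omega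

-- dichotomy at interval level (frequency)
lemma fInt_half {j' : ℕ} {m : ℤ} {l l' : ℕ} (h : (j':ℤ) ≤ m - 1) (hsub : fInt (j':ℤ) l' ⊆ fInt m l) :
    fInt (j':ℤ) l' ⊆ fInt (m-1) (2*l) ∨ fInt (j':ℤ) l' ⊆ fInt (m-1) (2*l+1) := by
  rw [fInt_subset_iff (by omega)] at hsub
  have hE : 2^((m - j').toNat) = 2 * 2^((m - 1 - j').toNat) := by
    rw [show (m - j').toNat = (m - 1 - j').toNat + 1 by omega, pow_succ]
    ring
  set E := 2^((m-1-(j':ℤ)).toNat) with hEdef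
  have e1 : 2^((m - j').toNat)*l = 2*(E*l) := by rw [hE]; ring
  have e2 : 2^((m - j').toNat)*(l+1) = 2*(E*l) + 2*E := by rw [hE]; ring
  have e3 : E*(2*l) = 2*(E*l) := by ring
  have e4 : E*(2*l+1) = 2*(E*l) + E := by ring
  have e5 : E*(2*l+1+1) = 2*(E*l) + 2*E := by ring
  rcases le_or_gt (l'+1) (2*(E*l) + E) with hc | hc
  · left; rw [fInt_subset_iff h]; simp only [← hEdef]; omega
  · right; rw [fInt_subset_iff h]; simp only [← hEdef]; omega

-- rectangle-level bisections
lemma rect_LR_split (j k : ℕ) (m : ℤ) (l : ℕ) :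
    dyadicRect (j+1) (2*k) m l ∪ dyadicRect (j+1) (2*k+1) m l = dyadicRect j k m l := by
  simp only [dyadicRect_eq, ← Set.union_prod, tInt_split]

lemma rect_DU_split (j k : ℕ) (m : ℤ) (l : ℕ) :
    dyadicRect j k (m-1) (2*l) ∪ dyadicRect j k (m-1) (2*l+1) = dyadicRect j k m l := by
  simp only [dyadicRect_eq, ← Set.prod_union, fInt_split]

lemma rect_LR_disjoint (j k : ℕ) (m : ℤ) (l : ℕ) :
    Disjoint (dyadicRect (j+1) (2*k) m l) (dyadicRect (j+1) (2*k+1) m l) := by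
  simp only [dyadicRect_eq]
  exact Set.disjoint_prod.2 (Or.inl (tInt_disjoint (by omega)))

lemma rect_DU_disjoint (j k : ℕ) (m : ℤ) (l : ℕ) :
    Disjoint (dyadicRect j k (m-1) (2*l)) (dyadicRect j k (m-1) (2*l+1)) := by
  simp only [dyadicRect_eq]
  exact Set.disjoint_prod.2 (Or.inr (fInt_disjoint (by omega)))

/-- The dichotomy: every disjoint cover of T refines one of the two bisections. -/
lemma cover_dichotomy {j k : ℕ} {m : ℤ} {l : ℕ} (hm : (j:ℤ)+1 ≤ m)
    {B : Finset (Set (ℝ×ℝ))} (hB : IsDisjointCover (dyadicRect j k m l) B) :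
    (∀ p ∈ B, p ⊆ dyadicRect (j+1) (2*k) m l ∨ p ⊆ dyadicRect (j+1) (2*k+1) m l) ∨
    (∀ p ∈ B, p ⊆ dyadicRect j k (m-1) (2*l) ∨ p ⊆ dyadicRect j k (m-1) (2*l+1)) := by
  obtain ⟨hmem, hdisj, hunion⟩ := hB
  by_cases hA : ∃ p0 ∈ B, ∃ k0 l0 : ℕ, p0 = dyadicRect j k0 (j:ℤ) l0
  · -- a full-width tile exists: frequency split
    obtain ⟨p0, hp0B, k0, l0, hp0⟩ := hA
    right
    intro q hqB
    obtain ⟨⟨jq, kq, lq, hkq, rfl⟩, hsubq⟩ := hmem q hqB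
    obtain ⟨htq, hfq⟩ := rect_subset_iff.1 hsubq
    have hjq1 : j ≤ jq := tInt_scale_le htq
    have hjq2 : (jq:ℤ) ≤ m := fInt_scale_le hfq
    -- p0's component inclusions
    obtain ⟨htp, hfp⟩ := rect_subset_iff.1 (hp0 ▸ (hmem p0 hp0B).2)
    have hk0 : k0 = k := by
      have := (tInt_subset_iff (le_refl j)).1 htp
      simp [Nat.sub_self] at this
      omega
    have hjqm : (jq:ℤ) ≤ m - 1 := by
      by_contra hcon
      have hjqeq : (jq:ℤ) = m := by omega
      have hlq : lq = l := by
        have := (fInt_subset_iff hjq2).1 hfq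
        have h0 : (m - jq).toNat = 0 := by omega
        rw [h0] at this
        simp at this
        omega
      -- q has full frequency extent, p0 full time extent; they overlap
      have hqfull : fInt (jq:ℤ) lq = fInt m l := by rw [hjqeq, hlq]
      have hne : p0 ≠ dyadicRect jq kq (jq:ℤ) lq := by
        intro he
        rw [hp0] at he
        obtain ⟨ht1, _⟩ := rect_subset_iff.1 he.le
        obtain ⟨ht2, _⟩ := rect_subset_iff.1 he.ge
        have := tInt_scale_le ht1
        have := tInt_scale_le ht2
        omega
      have hdis := hdisj hp0B hqB hne
      obtain ⟨x, hx⟩ := tInt_nonempty jq kq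
      obtain ⟨y, hy⟩ := fInt_nonempty (j:ℤ) l0
      have hmemq : (x, y) ∈ dyadicRect jq kq (jq:ℤ) lq := by
        rw [dyadicRect_eq, hqfull]
        exact ⟨hx, hfp hy⟩
      have hmemp : (x, y) ∈ p0 := by
        rw [hp0, dyadicRect_eq]
        exact ⟨by rw [hk0] at htp ⊢; exact htq hx, hy⟩
      exact Set.disjoint_left.1 hdis hmemp hmemq
    rcases fInt_half hjqm hfq with h | h
    · exact Or.inl (by rw [dyadicRect_eq, dyadicRect_eq]; exact Set.prod_mono htq h)
    · exact Or.inr (by rw [dyadicRect_eq, dyadicRect_eq]; exact Set.prod_mono htq h)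
  · -- no full-width tile: time split
    left
    intro q hqB
    obtain ⟨⟨jq, kq, lq, hkq, rfl⟩, hsubq⟩ := hmem q hqB
    obtain ⟨htq, hfq⟩ := rect_subset_iff.1 hsubq
    have hjq1 : j ≤ jq := tInt_scale_le htq
    have hjq : j + 1 ≤ jq := by
      rcases Nat.eq_or_lt_of_le hjq1 with he | hlt
      · exact absurd ⟨_, hqB, kq, lq, by rw [← he]⟩ hA
      · omega
    rcases tInt_half hjq htq with h | h
    · exact Or.inl (by rw [dyadicRect_eq, dyadicRect_eq]; exact Set.prod_mono h hfq)
    · exact Or.inr (by rw [dyadicRect_eq, dyadicRect_eq]; exact Set.prod_mono h hfq)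

lemma cover_split (c : Set (ℝ×ℝ) → ℝ) {T A A' : Set (ℝ×ℝ)} {B : Finset (Set (ℝ×ℝ))}
    (hB : IsDisjointCover T B) (hU : A ∪ A' = T) (hD : Disjoint A A')
    (hhalf : ∀ p ∈ B, p ⊆ A ∨ p ⊆ A') :
    ∃ B1 B2 : Finset (Set (ℝ×ℝ)), IsDisjointCover A B1 ∧ IsDisjointCover A' B2 ∧
      ∑ p ∈ B, c p = ∑ p ∈ B1, c p + ∑ p ∈ B2, c p := by
  classical
  obtain ⟨hmem, hdisj, hunion⟩ := hB
  refine ⟨B.filter (· ⊆ A), B.filter (¬ · ⊆ A), ⟨?_, ?_, ?_⟩, ⟨?_, ?_, ?_⟩, ?_⟩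
  · intro p hp
    obtain ⟨hpB, hpA⟩ := Finset.mem_filter.1 hp
    exact ⟨(hmem p hpB).1, hpA⟩
  · exact hdisj.subset (Finset.coe_subset.2 (Finset.filter_subset _ _))
  · apply subset_antisymm
    · apply Set.sUnion_subset
      intro p hp
      exact (Finset.mem_filter.1 (Finset.mem_coe.1 hp)).2
    · intro x hx
      have hxT : x ∈ T := hU ▸ Or.inl hx
      obtain ⟨p, hpB, hxp⟩ := hunion ▸ hxT
      rcases hhalf p (Finset.mem_coe.1 hpB) with h | h
      · exact ⟨p, Finset.mem_coe.2 (Finset.mem_filter.2 ⟨Finset.mem_coe.1 hpB, h⟩), hxp⟩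
      · exact absurd hx (Set.disjoint_left.1 hD.symm (h hxp))
  · intro p hp
    obtain ⟨hpB, hpA⟩ := Finset.mem_filter.1 hp
    rcases hhalf p hpB with h | h
    · exact absurd h hpA
    · exact ⟨(hmem p hpB).1, h⟩
  · exact hdisj.subset (Finset.coe_subset.2 (Finset.filter_subset _ _))
  · apply subset_antisymm
    · apply Set.sUnion_subset
      intro p hp
      obtain ⟨hpB, hpA⟩ := Finset.mem_filter.1 (Finset.mem_coe.1 hp)
      rcases hhalf p hpB with h | h
      · exact absurd h hpA
      · exact h
    · intro x hx
      have hxT : x ∈ T := hU ▸ Or.inr hx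
      obtain ⟨p, hpB, hxp⟩ := hunion ▸ hxT
      rcases hhalf p (Finset.mem_coe.1 hpB) with h | h
      · exact absurd hx (Set.disjoint_left.1 hD (h hxp))
      · refine ⟨p, Finset.mem_coe.2 (Finset.mem_filter.2 ⟨Finset.mem_coe.1 hpB, ?_⟩), hxp⟩
        intro hcon
        obtain ⟨w, hw⟩ : p.Nonempty := ⟨x, hxp⟩
        exact Set.disjoint_left.1 hD (hcon hw) (h hw)
  · exact (Finset.sum_filter_add_sum_filter_not B (· ⊆ A) c).symm

open scoped Classical in
lemma cover_combine (c : Set (ℝ×ℝ) → ℝ) {A A' : Set (ℝ×ℝ)} {B1 B2 : Finset (Set (ℝ×ℝ))}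
    (h1 : IsDisjointCover A B1) (h2 : IsDisjointCover A' B2) (hD : Disjoint A A') :
    IsDisjointCover (A ∪ A') (B1 ∪ B2) ∧
      ∑ p ∈ B1 ∪ B2, c p = ∑ p ∈ B1, c p + ∑ p ∈ B2, c p := by
  classical
  obtain ⟨hm1, hd1, hu1⟩ := h1
  obtain ⟨hm2, hd2, hu2⟩ := h2
  have hBdisj : Disjoint B1 B2 := by
    rw [Finset.disjoint_left]
    intro p hp1 hp2
    obtain ⟨⟨a, b, d, _, rfl⟩, hsub⟩ := hm1 p hp1
    obtain ⟨x, hx⟩ := dyadicRect_nonempty a b a d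
    exact Set.disjoint_left.1 hD (hsub hx) ((hm2 _ hp2).2 hx)
  refine ⟨⟨?_, ?_, ?_⟩, Finset.sum_union hBdisj⟩
  · intro p hp
    rcases Finset.mem_union.1 hp with h | h
    · exact ⟨(hm1 p h).1, (hm1 p h).2.trans Set.subset_union_left⟩
    · exact ⟨(hm2 p h).1, (hm2 p h).2.trans Set.subset_union_right⟩
  · intro p hp q hq hne
    simp only [Finset.coe_union, Set.mem_union, Finset.mem_coe] at hp hq
    rcases hp with hp | hp <;> rcases hq with hq | hq
    · exact hd1 hp hq hne
    · exact hD.mono (hm1 p hp).2 (hm2 q hq).2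
    · exact (hD.mono (hm1 q hq).2 (hm2 p hp).2).symm
    · exact hd2 hp hq hne
  · rw [Finset.coe_union, Set.sUnion_union, hu1, hu2]

lemma Ico_stack {e : ℝ} (he : 0 < e) (a : ℝ) :
    ∀ N : ℕ, ⋃ i ∈ Finset.range N, Ico (e*(a+i)) (e*(a+i+1)) = Ico (e*a) (e*(a+N))
  | 0 => by simp
  | (N+1) => by
    rw [Finset.range_add_one, Finset.set_biUnion_insert, Ico_stack he a N, Set.union_comm,
      Set.Ico_union_Ico_eq_Ico (by nlinarith [Nat.cast_nonneg (α := ℝ) N])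
        (by nlinarith [Nat.cast_nonneg (α := ℝ) N])]
    push_cast
    ring_nf

lemma exists_cover (jt k : ℕ) (jf : ℤ) (l : ℕ) (hk : k < 2^jt) (hj : (jt:ℤ) ≤ jf) :
    ∃ B : Finset (Set (ℝ×ℝ)), IsDisjointCover (dyadicRect jt k jf l) B := by
  classical
  set N := 2^((jf - jt).toNat) with hN
  have hmul : N*(l+1) = N*l + N := by ring
  refine ⟨(Finset.range N).image (fun i => dyadicRect jt k (jt:ℤ) (N*l + i)), ?_, ?_, ?_⟩
  · intro p hp
    simp only [Finset.mem_image, Finset.mem_range] at hp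
    obtain ⟨i, hi, rfl⟩ := hp
    refine ⟨⟨jt, k, N*l+i, hk, rfl⟩, ?_⟩
    rw [rect_subset_iff]
    refine ⟨subset_rfl, (fInt_subset_iff hj).2 ?_⟩
    rw [← hN]
    omega
  · intro p hp q hq hne
    simp only [Finset.coe_image, Set.mem_image, Finset.mem_coe, Finset.mem_range] at hp hq
    obtain ⟨i, hi, rfl⟩ := hp
    obtain ⟨i', hi', rfl⟩ := hq
    have hii : N*l+i ≠ N*l+i' := by
      intro h
      exact hne (by rw [show i = i' from by omega])
    simp only [id_eq, dyadicRect_eq]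
    exact Set.disjoint_prod.2 (Or.inr (fInt_disjoint hii))
  · rw [Finset.coe_image, Set.sUnion_image]
    have key : (2:ℝ)^((jt:ℤ)) * (N:ℝ) = 2^jf := by
      rw [hN]
      push_cast
      rw [← zpow_natCast (2:ℝ) ((jf - jt).toNat), ← zpow_add₀ (by norm_num : (2:ℝ) ≠ 0)]
      congr 1
      omega
    have hstack := Ico_stack (zpow_pos' ((jt:ℤ))) ((N:ℝ)*l) N
    have hfi : ∀ i : ℕ, fInt (jt:ℤ) (N*l+i) =
        Ico ((2:ℝ)^((jt:ℤ))*((N:ℝ)*l+i)) ((2:ℝ)^((jt:ℤ))*((N:ℝ)*l+i+1)) := by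
      intro i
      simp only [fInt]
      push_cast
      ring_nf
    calc ⋃ i ∈ (↑(Finset.range N) : Set ℕ), dyadicRect jt k (jt:ℤ) (N*l+i)
        = tInt jt k ×ˢ ⋃ i ∈ Finset.range N, Ico ((2:ℝ)^((jt:ℤ))*((N:ℝ)*l+i)) ((2:ℝ)^((jt:ℤ))*((N:ℝ)*l+i+1)) := by
          simp only [Finset.mem_coe, dyadicRect_eq, hfi]
          rw [Set.prod_iUnion₂]
      _ = tInt jt k ×ˢ Ico ((2:ℝ)^((jt:ℤ))*((N:ℝ)*l)) ((2:ℝ)^((jt:ℤ))*((N:ℝ)*l+N)) := by rw [hstack]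
      _ = dyadicRect jt k jf l := by
          rw [dyadicRect_eq]
          have e1 : (2:ℝ)^((jt:ℤ))*((N:ℝ)*l) = 2^jf * l := by linear_combination (l:ℝ) * key
          have e2 : (2:ℝ)^((jt:ℤ))*((N:ℝ)*l+(N:ℝ)) = 2^jf * (l+1) := by linear_combination ((l:ℝ)+1) * key
          rw [e1, e2]
          rfl

lemma tiles_finite (jt k : ℕ) (jf : ℤ) (l : ℕ) :
    {p : Set (ℝ×ℝ) | IsTile p ∧ p ⊆ dyadicRect jt k jf l}.Finite := by
  have hbig : (Set.Iic jf.toNat ×ˢ (Set.Iic (2^jf.toNat) ×ˢ Set.Iic (2^jf.toNat * (l+1)))).Finite :=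
    (Set.finite_Iic _).prod ((Set.finite_Iic _).prod (Set.finite_Iic _))
  apply (hbig.image (fun t : ℕ×ℕ×ℕ => dyadicRect t.1 t.2.1 (t.1:ℤ) t.2.2)).subset
  rintro p ⟨⟨j', k', l', hk', rfl⟩, hsub⟩
  obtain ⟨ht, hf⟩ := rect_subset_iff.1 hsub
  have hj' : (j':ℤ) ≤ jf := fInt_scale_le hf
  have c1 : (2:ℝ)^((j':ℤ)) = ((2^j' : ℕ) : ℝ) := by
    rw [zpow_natCast]
    push_cast
    ring
  have c2 : (2:ℝ)^jf = ((2^jf.toNat : ℕ) : ℝ) := by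
    push_cast
    rw [← zpow_natCast (2:ℝ) jf.toNat]
    congr 1
    omega
  have hl' : l' ≤ 2^jf.toNat * (l+1) := by
    have h1 := (Set.Ico_subset_Ico_iff (by
      have := zpow_pos' ((j':ℤ)); nlinarith : (2:ℝ)^((j':ℤ)) * l' < 2^((j':ℤ)) * (l'+1))).1 hf
    have hone : (1:ℝ) ≤ 2^((j':ℤ)) := by
      rw [c1]
      exact_mod_cast Nat.one_le_two_pow
    have h2 : ((l':ℝ)+1) ≤ 2^jf * ((l:ℝ)+1) := by nlinarith [h1.2]
    rw [c2] at h2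
    have h3 : ((l':ℝ)) ≤ ((2^jf.toNat * (l+1) : ℕ) : ℝ) := by push_cast; push_cast at h2; nlinarith
    exact_mod_cast h3
  refine ⟨(j', k', l'), ?_, rfl⟩
  refine Set.mem_prod.2 ⟨Set.mem_Iic.2 (by omega), Set.mem_prod.2 ⟨Set.mem_Iic.2 ?_, Set.mem_Iic.2 hl'⟩⟩
  exact le_trans hk'.le (Nat.pow_le_pow_right (by norm_num) (by omega))

def costSet (c : Set (ℝ×ℝ) → ℝ) (T : Set (ℝ×ℝ)) : Set ℝ :=
  {x | ∃ B : Finset (Set (ℝ×ℝ)), IsDisjointCover T B ∧ x = ∑ p ∈ B, c p}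

lemma costSet_finite (c : Set (ℝ×ℝ) → ℝ) (jt k : ℕ) (jf : ℤ) (l : ℕ) :
    (costSet c (dyadicRect jt k jf l)).Finite := by
  classical
  have hfin := tiles_finite jt k jf l
  apply ((hfin.toFinset.powerset.image (fun B => ∑ p ∈ B, c p)).finite_toSet).subset
  rintro x ⟨B, hB, rfl⟩
  simp only [Finset.coe_image, Set.mem_image, Finset.mem_coe, Finset.mem_powerset]
  exact ⟨B, fun p hp => hfin.mem_toFinset.2 (hB.1 p hp), rfl⟩

lemma csInf_add_set {A B : Set ℝ} (hA : A.Nonempty) (hbA : BddBelow A)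
    (hB : B.Nonempty) (hbB : BddBelow B) :
    sInf (Set.image2 (· + ·) A B) = sInf A + sInf B := by
  have hbdd : BddBelow (Set.image2 (· + ·) A B) := by
    obtain ⟨x, hx⟩ := hbA
    obtain ⟨y, hy⟩ := hbB
    exact ⟨x + y, by rintro z ⟨a', ha', b', hb', rfl⟩; exact add_le_add (hx ha') (hy hb')⟩
  apply le_antisymm
  · apply le_of_forall_pos_le_add
    intro ε hε
    obtain ⟨a, ha, hal⟩ := Real.lt_sInf_add_pos hA (half_pos hε)
    obtain ⟨b, hb, hbl⟩ := Real.lt_sInf_add_pos hB (half_pos hε)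
    have h := csInf_le hbdd (Set.mem_image2_of_mem ha hb)
    linarith
  · obtain ⟨a, ha⟩ := hA
    obtain ⟨b, hb⟩ := hB
    apply le_csInf ⟨a + b, Set.mem_image2_of_mem ha hb⟩
    rintro z ⟨a', ha', b', hb', rfl⟩
    exact add_le_add (csInf_le hbA ha') (csInf_le hbB hb')

lemma image2_add_bddBelow {A B : Set ℝ} (hbA : BddBelow A) (hbB : BddBelow B) :
    BddBelow (Set.image2 (· + ·) A B) := by
  obtain ⟨x, hx⟩ := hbA
  obtain ⟨y, hy⟩ := hbB
  exact ⟨x + y, by rintro z ⟨a', ha', b', hb', rfl⟩; exact add_le_add (hx ha') (hy hb')⟩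

end TV


/-- The minimal total cost over all disjoint coverings of `T` by tiles. -/
noncomputable def minCost (c : Set (ℝ × ℝ) → ℝ) (T : Set (ℝ × ℝ)) : ℝ :=
  sInf {x : ℝ | ∃ B : Finset (Set (ℝ × ℝ)), IsDisjointCover T B ∧ x = ∑ p ∈ B, c p}

/-- Thiele–Villemoes Lemma: for a dyadic rectangle `T` of area at
least two, with left/right halves `L, R` (time bisection) and lower/upper halves
`D, U` (frequency bisection), `m_T = min (m_L + m_R) (m_D + m_U)`. -/
theorem thiele_villemoes_lemma (c : Set (ℝ × ℝ) → ℝ)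
    (j k : ℕ) (m : ℤ) (l : ℕ) (hk : k < 2 ^ j) (harea : (j:ℤ) + 1 ≤ m) :
    minCost c (dyadicRect j k m l) =
      min (minCost c (dyadicRect (j+1) (2*k) m l) +
           minCost c (dyadicRect (j+1) (2*k+1) m l))
          (minCost c (dyadicRect j k (m-1) (2*l)) +
           minCost c (dyadicRect j k (m-1) (2*l+1))) := by
  classical
  have hpow : 2^(j+1) = 2^j * 2 := pow_succ 2 j
  obtain ⟨BT, hBT⟩ := exists_cover j k m l hk (by omega)
  obtain ⟨BL, hBL⟩ := exists_cover (j+1) (2*k) m l (by omega) (by push_cast; omega)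
  obtain ⟨BR, hBR⟩ := exists_cover (j+1) (2*k+1) m l (by omega) (by push_cast; omega)
  obtain ⟨BD, hBD⟩ := exists_cover j k (m-1) (2*l) hk (by omega)
  obtain ⟨BU, hBU⟩ := exists_cover j k (m-1) (2*l+1) hk (by omega)
  have hLne : (costSet c (dyadicRect (j+1) (2*k) m l)).Nonempty := ⟨_, BL, hBL, rfl⟩
  have hRne : (costSet c (dyadicRect (j+1) (2*k+1) m l)).Nonempty := ⟨_, BR, hBR, rfl⟩
  have hDne : (costSet c (dyadicRect j k (m-1) (2*l))).Nonempty := ⟨_, BD, hBD, rfl⟩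
  have hUne : (costSet c (dyadicRect j k (m-1) (2*l+1))).Nonempty := ⟨_, BU, hBU, rfl⟩
  have hLb := (costSet_finite c (j+1) (2*k) m l).bddBelow
  have hRb := (costSet_finite c (j+1) (2*k+1) m l).bddBelow
  have hDb := (costSet_finite c j k (m-1) (2*l)).bddBelow
  have hUb := (costSet_finite c j k (m-1) (2*l+1)).bddBelow
  have hset : costSet c (dyadicRect j k m l) =
      Set.image2 (· + ·) (costSet c (dyadicRect (j+1) (2*k) m l))
        (costSet c (dyadicRect (j+1) (2*k+1) m l)) ∪
      Set.image2 (· + ·) (costSet c (dyadicRect j k (m-1) (2*l)))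
        (costSet c (dyadicRect j k (m-1) (2*l+1))) := by
    apply subset_antisymm
    · rintro x ⟨B, hB, rfl⟩
      rcases cover_dichotomy harea hB with h | h
      · obtain ⟨B1, B2, h1, h2, hsum⟩ :=
          cover_split c hB (rect_LR_split j k m l) (rect_LR_disjoint j k m l) h
        exact Or.inl ⟨_, ⟨B1, h1, rfl⟩, _, ⟨B2, h2, rfl⟩, hsum.symm⟩
      · obtain ⟨B1, B2, h1, h2, hsum⟩ :=
          cover_split c hB (rect_DU_split j k m l) (rect_DU_disjoint j k m l) h
        exact Or.inr ⟨_, ⟨B1, h1, rfl⟩, _, ⟨B2, h2, rfl⟩, hsum.symm⟩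
    · rintro x (⟨a, ⟨B1, h1, rfl⟩, b, ⟨B2, h2, rfl⟩, rfl⟩ | ⟨a, ⟨B1, h1, rfl⟩, b, ⟨B2, h2, rfl⟩, rfl⟩)
      · obtain ⟨hcov, hsum⟩ := cover_combine c h1 h2 (rect_LR_disjoint j k m l)
        rw [rect_LR_split j k m l] at hcov
        exact ⟨_, hcov, hsum.symm⟩
      · obtain ⟨hcov, hsum⟩ := cover_combine c h1 h2 (rect_DU_disjoint j k m l)
        rw [rect_DU_split j k m l] at hcov
        exact ⟨_, hcov, hsum.symm⟩
  show sInf (costSet c (dyadicRect j k m l)) =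
      min (sInf (costSet c (dyadicRect (j+1) (2*k) m l)) +
           sInf (costSet c (dyadicRect (j+1) (2*k+1) m l)))
          (sInf (costSet c (dyadicRect j k (m-1) (2*l))) +
           sInf (costSet c (dyadicRect j k (m-1) (2*l+1))))
  rw [hset, csInf_union (image2_add_bddBelow hLb hRb) (hLne.image2 hRne)
      (image2_add_bddBelow hDb hUb) (hDne.image2 hUne),
    csInf_add_set hLne hLb hRne hRb, csInf_add_set hDne hDb hUne hUb]
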